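/- arXiv:2210.02175 — 3 statements merged into one kernel-verified Lean document; each statement's English description precedes it below -/
import Mathlib

section
/- Let V : (0,T)×(0,∞) → ℝ be twice differentiable in S and once in t, satisfying the risk-free Black–Scholes equation ∂_tV − (σ²S²/2)∂_{SS}V − r_R S ∂_S V + rV = 0 at every point of (0,T)×(0,∞), and suppose V(t,S) ≥ 0 everywhere. Then the function V̂(t,S) := e^{−ct} V(t,S), with c = λ_B(1−R_B) + λ_C(1−R_C), satisfies the risky (nonlinear) Black–Scholes equation ∂_tV̂ − (σ²S²/2)∂_{SS}V̂ − r_R S ∂_S V̂ + rV̂ + f(V̂) = 0 at every point of (0,T)×(0,∞). -/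
/-- The XVA source term `f(v) = λ_B(1−R_B) min{v,0} + (λ_C(1−R_C)+s_F) max{v,0}`
with funding spread `s_F = (1−R_B)λ_B`. -/
noncomputable def fXVA (lB lC RB RC : ℝ) (v : ℝ) : ℝ :=
  lB * (1 - RB) * min v 0 + (lC * (1 - RC) + (1 - RB) * lB) * max v 0

/-- If `V` solves the risk-free Black–Scholes equation on `(0,T)×(0,∞)` and `V ≥ 0`,
then `V̂(t,S) = e^{-ct} V(t,S)` with `c = λ_B(1−R_B)+λ_C(1−R_C)` solves the risky
(nonlinear) Black–Scholes equation there. -/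
theorem risky_BS_of_nonneg_solution
    (σ r r_R T lB lC RB RC : ℝ)
    (hσ : 0 < σ) (hT : 0 < T)
    (hlB : 0 ≤ lB) (hlC : 0 ≤ lC)
    (hRB : RB ∈ Set.Icc (0 : ℝ) 1) (hRC : RC ∈ Set.Icc (0 : ℝ) 1)
    (c : ℝ) (hc : c = lB * (1 - RB) + lC * (1 - RC))
    (V : ℝ → ℝ → ℝ)
    (hdiff_t : ∀ t ∈ Set.Ioo 0 T, ∀ S ∈ Set.Ioi (0 : ℝ),
      DifferentiableAt ℝ (fun τ => V τ S) t)
    (hdiff_S : ∀ t ∈ Set.Ioo 0 T, ∀ S ∈ Set.Ioi (0 : ℝ),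
      DifferentiableAt ℝ (fun s => V t s) S)
    (hdiff_SS : ∀ t ∈ Set.Ioo 0 T, ∀ S ∈ Set.Ioi (0 : ℝ),
      DifferentiableAt ℝ (deriv (fun s => V t s)) S)
    (hpde : ∀ t ∈ Set.Ioo 0 T, ∀ S ∈ Set.Ioi (0 : ℝ),
      deriv (fun τ => V τ S) t
        - σ ^ 2 * S ^ 2 / 2 * deriv (deriv (fun s => V t s)) S
        - r_R * S * deriv (fun s => V t s) S
        + r * V t S = 0)
    (hpos : ∀ t ∈ Set.Ioo 0 T, ∀ S ∈ Set.Ioi (0 : ℝ), 0 ≤ V t S)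
    (Vh : ℝ → ℝ → ℝ)
    (hVh : ∀ t S, Vh t S = Real.exp (-c * t) * V t S) :
    ∀ t ∈ Set.Ioo 0 T, ∀ S ∈ Set.Ioi (0 : ℝ),
      deriv (fun τ => Vh τ S) t
        - σ ^ 2 * S ^ 2 / 2 * deriv (deriv (fun s => Vh t s)) S
        - r_R * S * deriv (fun s => Vh t s) S
        + r * Vh t S + fXVA lB lC RB RC (Vh t S) = 0 := by
  intro t ht S hS
  have hV := hpde t ht S hS
  have h0 := hpos t ht S hS
  set E := Real.exp (-c * t) with hE
  have hEpos : 0 < E := Real.exp_pos _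
  -- time derivative
  have he : HasDerivAt (fun τ : ℝ => Real.exp (-c * τ)) (-c * E) t := by
    have h1 : HasDerivAt (fun τ : ℝ => -c * τ) (-c) t := by
      simpa using (hasDerivAt_id t).const_mul (-c)
    simpa [hE, Function.comp_def, mul_comm] using (Real.hasDerivAt_exp (-c * t)).comp t h1
  have ht1 : HasDerivAt (fun τ => Vh τ S)
      (-c * E * V t S + E * deriv (fun τ => V τ S) t) t := by
    have hfunt : (fun τ => Vh τ S) = fun τ => Real.exp (-c * τ) * V τ S :=
      funext fun τ => hVh τ S
    rw [hfunt]
    exact he.mul (hdiff_t t ht S hS).hasDerivAt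
  have hdt : deriv (fun τ => Vh τ S) t
      = -c * E * V t S + E * deriv (fun τ => V τ S) t := ht1.deriv
  -- first space derivative
  have hfun1 : (deriv fun s => Vh t s) = fun s => E * deriv (fun s => V t s) s := by
    funext s
    simp only [hVh, ← hE]
    exact deriv_const_mul_field E
  have hds : deriv (fun s => Vh t s) S = E * deriv (fun s => V t s) S := by
    rw [hfun1]
  -- second space derivative
  have hdss : deriv (deriv fun s => Vh t s) S
      = E * deriv (deriv fun s => V t s) S := by
    rw [hfun1]
    exact deriv_const_mul_field E
  -- the source term
  have hVhval : Vh t S = E * V t S := by rw [hVh, hE]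
  have hVhnn : 0 ≤ Vh t S := by rw [hVhval]; positivity
  have hf : fXVA lB lC RB RC (Vh t S) = c * (E * V t S) := by
    rw [fXVA, min_eq_right hVhnn, max_eq_left hVhnn, hVhval, hc]
    ring
  rw [hdt, hds, hdss, hf, hVhval]
  linear_combination E * hV
end

section
/- Let V : (0,T)×(0,∞) → ℝ be twice differentiable in S and once in t, satisfying the risk-free Black–Scholes equation ∂_tV − (σ²S²/2)∂_{SS}V − r_R S ∂_S V + rV = 0 at every point of (0,T)×(0,∞), and suppose V(t,S) ≤ 0 everywhere. Then the function V̂(t,S) := e^{−λ_B(1−R_B)t} V(t,S) satisfies the risky (nonlinear) Black–Scholes equation ∂_tV̂ − (σ²S²/2)∂_{SS}V̂ − r_R S ∂_S V̂ + rV̂ + f(V̂) = 0 at every point of (0,T)×(0,∞). -/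
/-- If `V` solves the risk-free Black–Scholes equation on `(0,T)×(0,∞)` and `V ≤ 0`,
then `V̂(t,S) = e^{-λ_B(1−R_B)t} V(t,S)` solves the risky (nonlinear)
Black–Scholes equation there. -/
theorem risky_BS_of_nonpos_solution
    (σ r r_R T lB lC RB RC : ℝ)
    (hσ : 0 < σ) (hT : 0 < T)
    (hlB : 0 ≤ lB) (hlC : 0 ≤ lC)
    (hRB : RB ∈ Set.Icc (0 : ℝ) 1) (hRC : RC ∈ Set.Icc (0 : ℝ) 1)
    (V : ℝ → ℝ → ℝ)
    (hdiff_t : ∀ t ∈ Set.Ioo 0 T, ∀ S ∈ Set.Ioi (0 : ℝ),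
      DifferentiableAt ℝ (fun τ => V τ S) t)
    (hdiff_S : ∀ t ∈ Set.Ioo 0 T, ∀ S ∈ Set.Ioi (0 : ℝ),
      DifferentiableAt ℝ (fun s => V t s) S)
    (hdiff_SS : ∀ t ∈ Set.Ioo 0 T, ∀ S ∈ Set.Ioi (0 : ℝ),
      DifferentiableAt ℝ (deriv (fun s => V t s)) S)
    (hpde : ∀ t ∈ Set.Ioo 0 T, ∀ S ∈ Set.Ioi (0 : ℝ),
      deriv (fun τ => V τ S) t
        - σ ^ 2 * S ^ 2 / 2 * deriv (deriv (fun s => V t s)) S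
        - r_R * S * deriv (fun s => V t s) S
        + r * V t S = 0)
    (hneg : ∀ t ∈ Set.Ioo 0 T, ∀ S ∈ Set.Ioi (0 : ℝ), V t S ≤ 0)
    (Vh : ℝ → ℝ → ℝ)
    (hVh : ∀ t S, Vh t S = Real.exp (-(lB * (1 - RB)) * t) * V t S) :
    ∀ t ∈ Set.Ioo 0 T, ∀ S ∈ Set.Ioi (0 : ℝ),
      deriv (fun τ => Vh τ S) t
        - σ ^ 2 * S ^ 2 / 2 * deriv (deriv (fun s => Vh t s)) S
        - r_R * S * deriv (fun s => Vh t s) S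
        + r * Vh t S + fXVA lB lC RB RC (Vh t S) = 0 := by
  intro t ht S hS
  have hc : 0 ≤ lB * (1 - RB) := mul_nonneg hlB (by linarith [hRB.2])
  have hVneg := hneg t ht S hS
  have hVhneg : Vh t S ≤ 0 := by
    rw [hVh]
    exact mul_nonpos_of_nonneg_of_nonpos (Real.exp_pos _).le hVneg
  have h1 : (fun τ => Vh τ S) = fun τ => Real.exp (-(lB * (1 - RB)) * τ) * V τ S :=
    funext fun τ => hVh τ S
  have h2 : (fun s => Vh t s) = fun s => Real.exp (-(lB * (1 - RB)) * t) * V t s :=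
    funext fun s => hVh t s
  have hdt : deriv (fun τ => Vh τ S) t =
      Real.exp (-(lB * (1 - RB)) * t) * (-(lB * (1 - RB)) * 1) * V t S
        + Real.exp (-(lB * (1 - RB)) * t) * deriv (fun τ => V τ S) t := by
    rw [h1]
    exact ((((hasDerivAt_id t).const_mul (-(lB * (1 - RB)))).exp).mul
      (hdiff_t t ht S hS).hasDerivAt).deriv
  have hds : ∀ x, deriv (fun s => Vh t s) x =
      Real.exp (-(lB * (1 - RB)) * t) * deriv (fun s => V t s) x := fun x => by
    rw [h2]; exact deriv_const_mul_field _
  have hdss : deriv (deriv (fun s => Vh t s)) S =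
      Real.exp (-(lB * (1 - RB)) * t) * deriv (deriv (fun s => V t s)) S := by
    rw [funext hds]; exact deriv_const_mul_field _
  have hp := hpde t ht S hS
  rw [hdt, hdss, hds S, fXVA, min_eq_left hVhneg, max_eq_right hVhneg, hVh]
  linear_combination Real.exp (-(lB * (1 - RB)) * t) * hp
end

section
/- For every t>0 and S>0, the Black–Scholes formula 𝓑𝓢 satisfies the risk-free Black–Scholes equation: ∂_t𝓑𝓢(t,S) − (σ²S²/2)∂_{SS}𝓑𝓢(t,S) − r_R S ∂_S𝓑𝓢(t,S) + r 𝓑𝓢(t,S) = 0. -/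
/-- Standard normal cumulative distribution function. -/
noncomputable def Phi (x : ℝ) : ℝ :=
  (Real.sqrt (2 * Real.pi))⁻¹ * ∫ u in Set.Iic x, Real.exp (-u ^ 2 / 2)

/-- `ζ₁ = (log(S/K) + (r_R + σ²/2)t)/(σ√t)`. -/
noncomputable def zeta1 (σ K r_R t S : ℝ) : ℝ :=
  (Real.log (S / K) + (r_R + σ ^ 2 / 2) * t) / (σ * Real.sqrt t)

/-- `ζ₂ = ζ₁ − σ√t`. -/
noncomputable def zeta2 (σ K r_R t S : ℝ) : ℝ :=
  zeta1 σ K r_R t S - σ * Real.sqrt t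

/-- The Black–Scholes formula
`𝓑𝓢(t,S) = α S e^{−(r−r_R)t} Φ(αζ₁) − α K e^{−rt} Φ(αζ₂)` (t = time to maturity). -/
noncomputable def BS (σ K r r_R α t S : ℝ) : ℝ :=
  α * S * Real.exp (-(r - r_R) * t) * Phi (α * zeta1 σ K r_R t S)
    - α * K * Real.exp (-r * t) * Phi (α * zeta2 σ K r_R t S)


/-!
Differentiating `α a Φ(α z₁) − α b Φ(α z₂)` produces the density terms
`a φ(z₁) z₁' − b φ(z₂) z₂'`. For the Black–Scholes coefficients `a φ(ζ₁) = b φ(ζ₂)`, since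
`ζ₁² − ζ₂² = 2 (log (S/K) + r_R t)`, so these terms reduce to `a φ(ζ₁) (ζ₁' − ζ₂')`: they vanish
in `S`, leaving the delta `α e^{−(r−r_R)t} Φ(αζ₁)`, and equal `a φ(ζ₁) σ / (2√t)` in `t`, which is
exactly what the gamma term cancels.
-/

open Real

noncomputable def phi (x : ℝ) : ℝ := (√(2 * π))⁻¹ * exp (-x ^ 2 / 2)

theorem phi_mul_of_sq_eq_one {α : ℝ} (hα : α ^ 2 = 1) (x : ℝ) : phi (α * x) = phi x := by
  rw [phi, phi, mul_pow, hα, one_mul]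

theorem integrable_exp_neg_sq_div_two :
    MeasureTheory.Integrable fun u : ℝ ↦ exp (-u ^ 2 / 2) := by
  simpa [neg_div, div_eq_inv_mul] using integrable_exp_neg_mul_sq (b := 1 / 2) (by norm_num)

theorem hasDerivAt_Phi (x : ℝ) : HasDerivAt Phi (phi x) x := by
  have hcont : Continuous fun u : ℝ ↦ exp (-u ^ 2 / 2) := by fun_prop
  have hPhi : Phi = fun y ↦ (√(2 * π))⁻¹ *
      ((∫ u in Set.Iic 0, exp (-u ^ 2 / 2)) + ∫ u in (0 : ℝ)..y, exp (-u ^ 2 / 2)) := by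
    funext y
    rw [← intervalIntegral.integral_Iic_sub_Iic integrable_exp_neg_sq_div_two.integrableOn
      integrable_exp_neg_sq_div_two.integrableOn, add_sub_cancel, Phi]
  rw [hPhi]
  exact ((intervalIntegral.integral_hasDerivAt_right (hcont.intervalIntegrable 0 x)
    (hcont.stronglyMeasurableAtFilter _ _) hcont.continuousAt).const_add _).const_mul _

theorem hasDerivAt_mul_Phi_sub_mul_Phi {α : ℝ} (hα : α ^ 2 = 1) {a b z₁ z₂ : ℝ → ℝ}
    {a' b' z₁' z₂' x : ℝ} (ha : HasDerivAt a a' x) (hb : HasDerivAt b b' x)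
    (hz₁ : HasDerivAt z₁ z₁' x) (hz₂ : HasDerivAt z₂ z₂' x)
    (hab : a x * phi (z₁ x) = b x * phi (z₂ x)) :
    HasDerivAt (fun y ↦ α * a y * Phi (α * z₁ y) - α * b y * Phi (α * z₂ y))
      (α * a' * Phi (α * z₁ x) - α * b' * Phi (α * z₂ x) + a x * phi (z₁ x) * (z₁' - z₂')) x := by
  have hΦ₁ := (hasDerivAt_Phi (α * z₁ x)).comp x (hz₁.const_mul α)
  have hΦ₂ := (hasDerivAt_Phi (α * z₂ x)).comp x (hz₂.const_mul α)
  refine (((ha.const_mul α).mul hΦ₁).sub ((hb.const_mul α).mul hΦ₂)).congr_deriv ?_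
  rw [Function.comp_apply, Function.comp_apply, phi_mul_of_sq_eq_one hα,
    phi_mul_of_sq_eq_one hα]
  linear_combination (α ^ 2 * z₂') * hab + (a x * phi (z₁ x) * (z₁' - z₂')) * hα

theorem zeta1_sq_sub_zeta2_sq {σ t : ℝ} (hσ : σ ≠ 0) (ht : 0 < t) (K r_R S : ℝ) :
    zeta1 σ K r_R t S ^ 2 - zeta2 σ K r_R t S ^ 2 = 2 * (log (S / K) + r_R * t) := by
  have hvol : σ * √t ≠ 0 := mul_ne_zero hσ (sqrt_pos.mpr ht).ne'
  have hζ₁ : zeta1 σ K r_R t S * (σ * √t) = log (S / K) + (r_R + σ ^ 2 / 2) * t :=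
    div_mul_cancel₀ _ hvol
  have hvol_sq : (σ * √t) ^ 2 = σ ^ 2 * t := by rw [mul_pow, sq_sqrt ht.le]
  rw [zeta2]
  linear_combination 2 * hζ₁ - hvol_sq

theorem mul_phi_zeta1_eq_mul_phi_zeta2 {σ K t S : ℝ} (hσ : σ ≠ 0) (hK : 0 < K) (ht : 0 < t)
    (hS : 0 < S) (r r_R : ℝ) :
    S * exp (-(r - r_R) * t) * phi (zeta1 σ K r_R t S)
      = K * exp (-r * t) * phi (zeta2 σ K r_R t S) := by
  have hζ : -zeta1 σ K r_R t S ^ 2 / 2 = -zeta2 σ K r_R t S ^ 2 / 2 - log (S / K) - r_R * t := by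
    linear_combination (-1 / 2 : ℝ) * zeta1_sq_sub_zeta2_sq hσ ht K r_R S
  rw [phi, phi, hζ, exp_sub, exp_sub, exp_log (div_pos hS hK),
    show -(r - r_R) * t = -r * t + r_R * t by ring, exp_add]
  field_simp [hS.ne', hK.ne']

theorem hasDerivAt_zeta1_spot {K S : ℝ} (hK : K ≠ 0) (hS : S ≠ 0) (σ r_R t : ℝ) :
    HasDerivAt (fun s ↦ zeta1 σ K r_R t s) (1 / (S * (σ * √t))) S := by
  have hlog := ((hasDerivAt_id S).div_const K).log (div_ne_zero hS hK)
  refine ((hlog.add_const ((r_R + σ ^ 2 / 2) * t)).div_const (σ * √t)).congr_deriv ?_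
  rw [id, div_div_div_cancel_right₀ hK, div_div]

theorem hasDerivAt_BS_spot {σ K α t S : ℝ} (hσ : σ ≠ 0) (hK : 0 < K) (hα : α ^ 2 = 1)
    (ht : 0 < t) (hS : 0 < S) (r r_R : ℝ) :
    HasDerivAt (BS σ K r r_R α t)
      (α * exp (-(r - r_R) * t) * Phi (α * zeta1 σ K r_R t S)) S := by
  have hζ₁ := hasDerivAt_zeta1_spot hK.ne' hS.ne' σ r_R t
  have hζ₂ : HasDerivAt (fun s ↦ zeta2 σ K r_R t s) (1 / (S * (σ * √t))) S :=
    hζ₁.sub_const _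
  have h := hasDerivAt_mul_Phi_sub_mul_Phi hα ((hasDerivAt_id S).mul_const _)
    (hasDerivAt_const S (K * exp (-r * t))) hζ₁ hζ₂
    (mul_phi_zeta1_eq_mul_phi_zeta2 hσ hK ht hS r r_R)
  convert h using 1
  · funext s
    simp only [BS, id]
    ring
  · simp

theorem deriv_deriv_BS_spot {σ K α t S : ℝ} (hσ : σ ≠ 0) (hK : 0 < K) (hα : α ^ 2 = 1)
    (ht : 0 < t) (hS : 0 < S) (r r_R : ℝ) :
    deriv (deriv (BS σ K r r_R α t)) S
      = exp (-(r - r_R) * t) * phi (zeta1 σ K r_R t S) / (S * (σ * √t)) := by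
  have hdelta : deriv (BS σ K r r_R α t)
      =ᶠ[nhds S] fun s ↦ α * exp (-(r - r_R) * t) * Phi (α * zeta1 σ K r_R t s) := by
    filter_upwards [Ioi_mem_nhds hS] with s hs
    exact (hasDerivAt_BS_spot hσ hK hα ht hs r r_R).deriv
  have hgamma := ((hasDerivAt_Phi _).comp S
    ((hasDerivAt_zeta1_spot hK.ne' hS.ne' σ r_R t).const_mul α)).const_mul
    (α * exp (-(r - r_R) * t))
  rw [hdelta.deriv_eq]
  refine hgamma.deriv.trans ?_
  rw [phi_mul_of_sq_eq_one hα]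
  linear_combination exp (-(r - r_R) * t) * phi (zeta1 σ K r_R t S) / (S * (σ * √t)) * hα

theorem hasDerivAt_BS_time {σ K α t S : ℝ} (hσ : σ ≠ 0) (hK : 0 < K) (hα : α ^ 2 = 1)
    (ht : 0 < t) (hS : 0 < S) (r r_R : ℝ) :
    HasDerivAt (fun τ ↦ BS σ K r r_R α τ S)
      (σ * S * exp (-(r - r_R) * t) * phi (zeta1 σ K r_R t S) / (2 * √t)
        + r_R * S * (α * exp (-(r - r_R) * t) * Phi (α * zeta1 σ K r_R t S))
        - r * BS σ K r r_R α t S) t := by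
  have hζ₁ : DifferentiableAt ℝ (fun τ ↦ zeta1 σ K r_R τ S) t := by
    have hsqrt := sqrt_pos.mpr ht
    unfold zeta1
    fun_prop (disch := positivity)
  have hζ₂ : HasDerivAt (fun τ ↦ zeta2 σ K r_R τ S)
      (deriv (fun τ ↦ zeta1 σ K r_R τ S) t - σ * (1 / (2 * √t))) t :=
    hζ₁.hasDerivAt.sub ((hasDerivAt_sqrt ht.ne').const_mul σ)
  have h := hasDerivAt_mul_Phi_sub_mul_Phi hα
    (((hasDerivAt_id t).const_mul (-(r - r_R))).exp.const_mul S)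
    (((hasDerivAt_id t).const_mul (-r)).exp.const_mul K) hζ₁.hasDerivAt hζ₂
    (mul_phi_zeta1_eq_mul_phi_zeta2 hσ hK ht hS r r_R)
  convert h using 1
  · funext τ
    simp only [BS, id]
    ring
  · simp only [BS, id]
    ring

/-- The Black–Scholes formula satisfies the risk-free Black–Scholes PDE
on `(0,∞)×(0,∞)`. -/
theorem BS_solves_BS_pde
    (σ K r r_R α : ℝ) (hσ : 0 < σ) (hK : 0 < K) (hα : α = 1 ∨ α = -1) :
    ∀ t > (0 : ℝ), ∀ S > (0 : ℝ),
      deriv (fun τ => BS σ K r r_R α τ S) t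
        - σ ^ 2 * S ^ 2 / 2 * deriv (deriv (fun s => BS σ K r r_R α t s)) S
        - r_R * S * deriv (fun s => BS σ K r r_R α t s) S
        + r * BS σ K r r_R α t S = 0 := by
  intro t ht S hS
  have hα_sq : α ^ 2 = 1 := by rcases hα with rfl | rfl <;> norm_num
  rw [(hasDerivAt_BS_time hσ.ne' hK hα_sq ht hS r r_R).deriv,
    deriv_deriv_BS_spot hσ.ne' hK hα_sq ht hS r r_R,
    (hasDerivAt_BS_spot hσ.ne' hK hα_sq ht hS r r_R).deriv]
  field_simp [(sqrt_pos.mpr ht).ne']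
  ring
end
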